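/- Parabolic bound on the unstable spectrum of the Burgers linearization (scaling estimate from Section 1): Let ε > 0 and λ ∈ ℂ, and suppose w : ℝ → ℂ is twice continuously differentiable, not identically zero, with w and w' square-integrable on ℝ, satisfying w''(x) = (d/dx)( ū^ε(x) w(x) ) + λ w(x) for all x ∈ ℝ. Then Re λ ≤ ε²/4, and if Re λ ≥ 0 then also |Im λ| ≤ ε²; in particular every such λ with Re λ ≥ 0 satisfies |λ| ≤ 2ε². -/

import Mathlib

/-!
Multiply the eigenvalue equation by `w̄` and integrate. The flux `v = w' - ū w` satisfies
`v' = λ w`, so `(v w̄)' = λ |w|² + v w̄'`; as `ū` is bounded, `v w̄` and its derivative are products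
of `L²` functions, hence integrable, and the integral of the derivative vanishes:
`λ ‖w‖² + ‖w'‖² = ∫ ū w w̄'`.
Since `|ū| ≤ |ε|`, the right side is at most `|ε| ∫ |w| |w'|`, and Young's inequality
`t |w| |w'| ≤ t²/4 |w|² + |w'|²` with `t = |ε|` gives `Re λ ≤ ε²/4`. If `Re λ ≥ 0`, the real part
also gives `‖w'‖² ≤ |ε| ∫ |w| |w'|`, and then `t = 2|ε|` yields `∫ |w| |w'| ≤ |ε| ‖w‖²`, which bounds
`|Im λ|` by `ε²`.
-/

open MeasureTheory ComplexConjugate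

noncomputable def burgersProfile (ε : ℝ) (x : ℝ) : ℝ := -ε * Real.tanh (ε * x / 2)

theorem Real.differentiable_tanh : Differentiable ℝ Real.tanh := by
  have h : Real.tanh = fun x => Real.sinh x / Real.cosh x :=
    funext fun x => Real.tanh_eq_sinh_div_cosh x
  rw [h]
  exact Real.differentiable_sinh.div Real.differentiable_cosh fun x => (Real.cosh_pos x).ne'

theorem differentiable_burgersProfile (ε : ℝ) : Differentiable ℝ (burgersProfile ε) :=
  (Real.differentiable_tanh.comp (by fun_prop)).const_mul (-ε)

theorem abs_burgersProfile_le (ε x : ℝ) : |burgersProfile ε x| ≤ |ε| := by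
  rw [burgersProfile, abs_mul, abs_neg]
  exact mul_le_of_le_one_right (abs_nonneg ε) (Real.abs_tanh_lt_one _).le

namespace MeasureTheory

variable {α : Type*} {m : MeasurableSpace α} {μ : Measure α}

theorem MemLp.bdd_mul {𝕜 : Type*} [NormedRing 𝕜] {f g : α → 𝕜} {p : ENNReal} {c : ℝ}
    (hg : MemLp g p μ) (hf : AEStronglyMeasurable f μ) (hf_bound : ∀ᵐ x ∂μ, ‖f x‖ ≤ c) :
    MemLp (fun x => f x * g x) p μ :=
  hg.of_le_mul (hf.mul hg.1) <| hf_bound.mono fun _ hx =>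
    (norm_mul_le _ _).trans (mul_le_mul_of_nonneg_right hx (norm_nonneg _))

theorem MemLp.integrable_mul_conj {𝕜 : Type*} [RCLike 𝕜] {f g : α → 𝕜} (hf : MemLp f 2 μ)
    (hg : MemLp g 2 μ) : Integrable (fun x => f x * conj (g x)) μ :=
  hf.integrable_mul hg.star

theorem MemLp.integrable_norm_mul_norm {E F : Type*} [NormedAddCommGroup E]
    [NormedAddCommGroup F] {f : α → E} {g : α → F} (hf : MemLp f 2 μ) (hg : MemLp g 2 μ) :
    Integrable (fun x => ‖f x‖ * ‖g x‖) μ :=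
  hf.norm.integrable_mul hg.norm

theorem integral_mul_conj_self {𝕜 : Type*} [RCLike 𝕜] (f : α → 𝕜) :
    ∫ x, f x * conj (f x) ∂μ = ((∫ x, ‖f x‖ ^ 2 ∂μ : ℝ) : 𝕜) := by
  simp_rw [RCLike.mul_conj, ← RCLike.ofReal_pow]
  exact integral_ofReal

theorem integral_norm_sq_pos {X E : Type*} [TopologicalSpace X] {mX : MeasurableSpace X}
    [NormedAddCommGroup E] {ν : Measure X} [ν.IsOpenPosMeasure] {w : X → E}
    (hc : Continuous w) (hw0 : w ≠ 0) (hL2 : MemLp w 2 ν) :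
    0 < ∫ x, ‖w x‖ ^ 2 ∂ν := by
  refine (integral_nonneg fun x => sq_nonneg ‖w x‖).lt_of_ne fun h => hw0 ?_
  have hae := (integral_eq_zero_iff_of_nonneg (fun x => sq_nonneg ‖w x‖)
    ((memLp_two_iff_integrable_sq_norm hL2.1).1 hL2)).1 h.symm
  refine (hc.ae_eq_iff_eq ν continuous_const).1 ?_
  filter_upwards [hae] with x hx
  exact norm_eq_zero.1 (pow_eq_zero_iff two_ne_zero |>.1 hx)

theorem mul_integral_norm_mul_norm_le {E F : Type*} [NormedAddCommGroup E]
    [NormedAddCommGroup F] {f : α → E} {g : α → F} (t : ℝ) (hf : MemLp f 2 μ)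
    (hg : MemLp g 2 μ) :
    t * ∫ x, ‖f x‖ * ‖g x‖ ∂μ ≤ t ^ 2 / 4 * ∫ x, ‖f x‖ ^ 2 ∂μ + ∫ x, ‖g x‖ ^ 2 ∂μ := by
  have hf2 := (memLp_two_iff_integrable_sq_norm hf.1).1 hf
  have hg2 := (memLp_two_iff_integrable_sq_norm hg.1).1 hg
  rw [← integral_const_mul, ← integral_const_mul, ← integral_add (hf2.const_mul _) hg2]
  refine integral_mono ((hf.integrable_norm_mul_norm hg).const_mul t)
    ((hf2.const_mul _).add hg2) fun x => ?_
  nlinarith [sq_nonneg (t * ‖f x‖ / 2 - ‖g x‖)]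

theorem norm_integral_mul_mul_conj_le {𝕜 : Type*} [RCLike 𝕜] {u f g : α → 𝕜} {c : ℝ}
    (hu : ∀ x, ‖u x‖ ≤ c) (hf : MemLp f 2 μ) (hg : MemLp g 2 μ) :
    ‖∫ x, u x * f x * conj (g x) ∂μ‖ ≤ c * ∫ x, ‖f x‖ * ‖g x‖ ∂μ := by
  rw [← integral_const_mul]
  refine norm_integral_le_of_norm_le ((hf.integrable_norm_mul_norm hg).const_mul c)
    (ae_of_all _ fun x => ?_)
  rw [norm_mul, norm_mul, RCLike.norm_conj, mul_assoc]
  exact mul_le_mul_of_nonneg_right (hu x) (by positivity)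

end MeasureTheory

theorem integral_norm_sq_mul_add_eq_integral_mul_mul_conj {u w : ℝ → ℂ} {c : ℝ} {lam : ℂ}
    (hu : Differentiable ℝ u) (hu_bound : ∀ x, ‖u x‖ ≤ c) (hw : ContDiff ℝ 2 w)
    (hwL2 : MemLp w 2 volume) (hw'L2 : MemLp (deriv w) 2 volume)
    (heq : ∀ x, deriv (deriv w) x = deriv (fun y => u y * w y) x + lam * w x) :
    lam * (∫ x, ‖w x‖ ^ 2 : ℝ) + (∫ x, ‖deriv w x‖ ^ 2 : ℝ) =
      ∫ x, u x * w x * conj (deriv w x) := by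
  have hw1 : Differentiable ℝ w := hw.differentiable two_ne_zero
  set v : ℝ → ℂ := fun x => deriv w x - u x * w x
  have huwL2 := hwL2.bdd_mul hu.continuous.aestronglyMeasurable (ae_of_all _ hu_bound)
  have hvL2 : MemLp v 2 volume := hw'L2.sub huwL2
  have hv : ∀ x, HasDerivAt v (lam * w x) x := fun x => by
    have huw : HasDerivAt (fun y => u y * w y) (deriv u x * w x + u x * deriv w x) x :=
      (hu x).hasDerivAt.mul (hw1 x).hasDerivAt
    refine ((hw.differentiable_deriv_two x).hasDerivAt.sub huw).congr_deriv ?_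
    rw [heq x, huw.deriv]
    ring
  have hvw : ∀ x, HasDerivAt (fun y => v y * conj (w y))
      (lam * (w x * conj (w x)) + v x * conj (deriv w x)) x := fun x => by
    refine ((hv x).mul (hw1 x).hasDerivAt.star).congr_deriv ?_
    simp only [starRingEnd_apply]
    ring
  have hwint := hwL2.integrable_mul_conj hwL2
  have hvint := hvL2.integrable_mul_conj hw'L2
  have h0 := integral_eq_zero_of_hasDerivAt_of_integrable hvw
    ((hwint.const_mul lam).add hvint) (hvL2.integrable_mul_conj hwL2)
  have hsplit : ∫ x, v x * conj (deriv w x) =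
      (∫ x, deriv w x * conj (deriv w x)) - ∫ x, u x * w x * conj (deriv w x) := by
    simp only [v, sub_mul]
    exact integral_sub (hw'L2.integrable_mul_conj hw'L2) (huwL2.integrable_mul_conj hw'L2)
  rw [integral_add (hwint.const_mul lam) hvint, integral_const_mul, hsplit,
    integral_mul_conj_self w, integral_mul_conj_self (deriv w)] at h0
  linear_combination h0

theorem eigenvalue_bounds_of_energy_identity {lam I : ℂ} {A B D c : ℝ} (hA : 0 < A)
    (hid : lam * A + B = I) (hI : ‖I‖ ≤ c * D) (hD : ∀ t, t * D ≤ t ^ 2 / 4 * A + B) :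
    lam.re ≤ c ^ 2 / 4 ∧ (0 ≤ lam.re → |lam.im| ≤ c ^ 2) ∧
      (0 ≤ lam.re → ‖lam‖ ≤ 2 * c ^ 2) := by
  have hre : lam.re * A + B = I.re := by simpa using congrArg Complex.re hid
  have him : lam.im * A = I.im := by simpa using congrArg Complex.im hid
  have hIre := Complex.re_le_norm I
  have hre_le : lam.re ≤ c ^ 2 / 4 :=
    le_of_mul_le_mul_right (by linarith [hD c]) hA
  have him_le : 0 ≤ lam.re → |lam.im| ≤ c ^ 2 := fun hre0 => by
    have hB : B ≤ c * D := by nlinarith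
    have hcD : c * D ≤ c ^ 2 * A := by nlinarith [hD (2 * c)]
    refine le_of_mul_le_mul_right ?_ hA
    rw [← abs_of_pos hA, ← abs_mul, him, abs_of_pos hA]
    linarith [Complex.abs_im_le_norm I]
  refine ⟨hre_le, him_le, fun hre0 => ?_⟩
  have := Complex.norm_le_abs_re_add_abs_im lam
  rw [abs_of_nonneg hre0] at this
  nlinarith [him_le hre0, sq_nonneg c]

theorem burgers_spectrum_parabolic_bound_general
    (ε : ℝ) (lam : ℂ)
    (w : ℝ → ℂ) (hw : ContDiff ℝ 2 w) (hw0 : w ≠ 0)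
    (hwL2 : MemLp w 2 volume) (hw'L2 : MemLp (deriv w) 2 volume)
    (heq : ∀ x : ℝ,
      deriv (deriv w) x
        = deriv (fun y => (burgersProfile ε y : ℂ) * w y) x + lam * w x) :
    lam.re ≤ ε ^ 2 / 4 ∧
      (0 ≤ lam.re → |lam.im| ≤ ε ^ 2) ∧
      (0 ≤ lam.re → ‖lam‖ ≤ 2 * ε ^ 2) := by
  have hu : ∀ x, ‖(burgersProfile ε x : ℂ)‖ ≤ |ε| := fun x => by
    rw [Complex.norm_real, Real.norm_eq_abs]
    exact abs_burgersProfile_le ε x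
  have hid := integral_norm_sq_mul_add_eq_integral_mul_mul_conj
    (fun x => (differentiable_burgersProfile ε x).hasDerivAt.ofReal_comp.differentiableAt)
    hu hw hwL2 hw'L2 heq
  simpa only [sq_abs] using eigenvalue_bounds_of_energy_identity
    (integral_norm_sq_pos hw.continuous hw0 hwL2) hid
    (norm_integral_mul_mul_conj_le hu hwL2 hw'L2)
    (fun t => mul_integral_norm_mul_norm_le t hwL2 hw'L2)

/-- **Parabolic bound on the unstable spectrum of the Burgers linearization**
(scaling estimate from Section 1): any eigenvalue `λ` of the linearization of
Burgers equation about the amplitude-`ε` profile satisfies `Re λ ≤ ε²/4`, and if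
`Re λ ≥ 0` also `|Im λ| ≤ ε²`; in particular any nonstable eigenvalue satisfies
`|λ| ≤ 2 ε²`. -/
theorem burgers_spectrum_parabolic_bound
    (ε : ℝ) (hε : 0 < ε) (lam : ℂ)
    (w : ℝ → ℂ) (hw : ContDiff ℝ 2 w) (hw0 : w ≠ 0)
    (hwL2 : MemLp w 2 volume) (hw'L2 : MemLp (deriv w) 2 volume)
    (heq : ∀ x : ℝ,
      deriv (deriv w) x
        = deriv (fun y => (burgersProfile ε y : ℂ) * w y) x + lam * w x) :
    lam.re ≤ ε ^ 2 / 4 ∧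
      (0 ≤ lam.re → |lam.im| ≤ ε ^ 2) ∧
      (0 ≤ lam.re → ‖lam‖ ≤ 2 * ε ^ 2) :=
  burgers_spectrum_parabolic_bound_general ε lam w hw hw0 hwL2 hw'L2 heq
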